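/- Let $B$ be the weighted backward shift on $\ell^2(V)$ for the tree $V = \mathbb{Z} \cup \{(-k,j) : k \ge 1, 1 \le j \le k\}$ with weights $\mu_1$ on $\mathbb{Z}$ and $\mu_2$ on the branches, where $1 < |\mu_1| < |\mu_2|$. Then the restriction of $B$ to the closed subspace $CR(B)$ of chain recurrent vectors is not a chain recurrent operator; in fact $CR(B\vert_{CR(B)}) = \{0\}$ while $CR(B)$ is infinite dimensional. -/

import Mathlib

/-- A δ-chain for `T` from `f` to `g`: a finite sequence `(u l)_{l=0}^m`, `m ≥ 1`,
with `u 0 = f`, `u m = g`, and `‖u l - T (u (l-1))‖ < δ` for `1 ≤ l ≤ m`. -/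
def IsDeltaChain {X : Type*} [NormedAddCommGroup X] [NormedSpace ℂ X]
    (T : X →L[ℂ] X) (δ : ℝ) (f g : X) : Prop :=
  ∃ (m : ℕ) (u : ℕ → X), 1 ≤ m ∧ u 0 = f ∧ u m = g ∧
    ∀ l, 1 ≤ l → l ≤ m → ‖u l - T (u (l - 1))‖ < δ

/-- `f` is a chain recurrent vector for `T`. -/
def ChainRecVec {X : Type*} [NormedAddCommGroup X] [NormedSpace ℂ X]
    (T : X →L[ℂ] X) (f : X) : Prop :=
  ∀ δ : ℝ, 0 < δ → IsDeltaChain T δ f f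

/-- `f` is chain recurrent for the restriction of `T` to the subset `S`
(all points of the chain are required to lie in `S`). -/
def RelChainRecVec {X : Type*} [NormedAddCommGroup X] [NormedSpace ℂ X]
    (T : X →L[ℂ] X) (S : Set X) (f : X) : Prop :=
  ∀ δ : ℝ, 0 < δ → ∃ (m : ℕ) (u : ℕ → X), 1 ≤ m ∧ (∀ l ≤ m, u l ∈ S) ∧
    u 0 = f ∧ u m = f ∧ ∀ l, 1 ≤ l → l ≤ m → ‖u l - T (u (l - 1))‖ < δ

open scoped ENNReal

/-- Branch vertices `(-k, j)` of the tree, encoded by pairs `(k, j)` with `1 ≤ j ≤ k`. -/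
abbrev TreeBranch : Type := {p : ℕ × ℕ // 1 ≤ p.2 ∧ p.2 ≤ p.1}

/-- The tree `V = ℤ ∪ {(-k,j) : k ∈ ℕ, 1 ≤ j ≤ k}`. -/
abbrev TreeV : Type := ℤ ⊕ TreeBranch

/-- The canonical unit vectors of `ℓ²(V)`. -/
noncomputable def eV (v : TreeV) : lp (fun _ : TreeV => ℂ) 2 := lp.single 2 v 1



namespace TreeAux

abbrev X : Type := lp (fun _ : TreeV => ℂ) 2

lemma eV_apply (v w : TreeV) : (eV v : ∀ _ : TreeV, ℂ) w = if w = v then 1 else 0 := by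
  by_cases h : w = v
  · subst h; simp [eV, lp.single_apply_self]
  · simp [eV, lp.single_apply_ne _ _ _ h, h]

lemma smul_eV_apply (c : ℂ) (v w : TreeV) :
    ((c • eV v : X) : ∀ _ : TreeV, ℂ) w = if w = v then c else 0 := by
  rw [lp.coeFn_smul, Pi.smul_apply, eV_apply, smul_eq_mul]
  split <;> simp

lemma norm_eV (v : TreeV) : ‖eV v‖ = 1 := by
  have := lp.norm_single (p := 2) (E := fun _ : TreeV => ℂ) (by norm_num) v (1:ℂ)
  simpa [eV] using this

lemma norm_smul_eV (c : ℂ) (v : TreeV) : ‖(c • eV v : X)‖ = ‖c‖ := by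
  rw [norm_smul, norm_eV, mul_one]

noncomputable def coordCLM (w : TreeV) : X →L[ℂ] ℂ :=
  LinearMap.mkContinuous
    { toFun := fun f => f w
      map_add' := fun f g => by simp [lp.coeFn_add]
      map_smul' := fun c f => by simp [lp.coeFn_smul] }
    1 (fun f => by
      show ‖(f : ∀ _ : TreeV, ℂ) w‖ ≤ 1 * ‖f‖
      simpa using lp.norm_apply_le_norm (p := 2) (E := fun _ : TreeV => ℂ) (by norm_num) f w)

lemma coord_apply (w : TreeV) (f : X) : coordCLM w f = f w := rfl

lemma hasSum_single_eV (g : X) : HasSum (fun v : TreeV => (g v : ℂ) • eV v) g := by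
  haveI : Fact ((1:ℝ≥0∞) ≤ 2) := ⟨by norm_num⟩
  have h := lp.hasSum_single (E := fun _ : TreeV => ℂ) (p := 2) (by norm_num) g
  refine h.congr_fun fun v => ?_
  rw [eV, ← lp.single_smul]
  norm_num

lemma coordB_eq (B : X →L[ℂ] X) (g : X) (w v0 : TreeV)
    (hv : ∀ v, v ≠ v0 → (g v : ℂ) * (B (eV v) : ∀ _ : TreeV, ℂ) w = 0) :
    (B g : ∀ _ : TreeV, ℂ) w = g v0 * (B (eV v0) : ∀ _ : TreeV, ℂ) w := by
  have h := ((hasSum_single_eV g).mapL B).mapL (coordCLM w)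
  have h2 : HasSum (fun v : TreeV => (g v : ℂ) * (B (eV v) : ∀ _ : TreeV, ℂ) w)
      ((B g : ∀ _ : TreeV, ℂ) w) := by
    refine h.congr_fun fun v => ?_
    rw [map_smul, map_smul, coord_apply, smul_eq_mul]
  exact h2.unique (hasSum_single v0 hv)

end TreeAux

section Coord

variable {μ1 μ2 : ℂ} {B : TreeAux.X →L[ℂ] TreeAux.X}
open TreeAux Sum

variable (hspine : ∀ n : ℤ, B (eV (Sum.inl n)) = μ1 • eV (Sum.inl (n - 1)))
variable (hbranch : ∀ (k j : ℕ) (h1 : 2 ≤ j) (h2 : j ≤ k),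
      B (eV (Sum.inr ⟨(k, j), ⟨show 1 ≤ j from Nat.le_of_succ_le h1, h2⟩⟩)) =
        μ2 • eV (Sum.inr ⟨(k, j - 1), ⟨show 1 ≤ j - 1 from Nat.le_sub_of_add_le h1, show j - 1 ≤ k from (Nat.sub_le j 1).trans h2⟩⟩))
variable (hjoin : ∀ (k : ℕ) (hk : 1 ≤ k),
      B (eV (Sum.inr ⟨(k, 1), ⟨le_refl 1, hk⟩⟩)) = μ2 • eV (Sum.inl (-(k : ℤ))))

/-- branch coefficient, with out-of-range defaulting to 0 -/
noncomputable def gbc (g : TreeAux.X) (k j : ℕ) : ℂ :=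
  if h : 1 ≤ j ∧ j ≤ k then g (Sum.inr ⟨(k,j),h⟩) else 0

include hspine hbranch hjoin in
lemma coordB_branch (g : TreeAux.X) (k j : ℕ) (h : 1 ≤ j ∧ j ≤ k) :
    (B g : ∀ _ : TreeV, ℂ) (inr ⟨(k,j),h⟩) = μ2 * gbc g k (j+1) := by
  set w : TreeV := inr ⟨(k,j),h⟩ with hw
  have hzero : ∀ v : TreeV, (∀ hjk : j + 1 ≤ k, v ≠ inr ⟨(k,j+1), ⟨by omega, hjk⟩⟩) →
      (B (eV v) : ∀ _ : TreeV, ℂ) w = 0 := by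
    rintro (n | ⟨⟨k', j'⟩, hj1, hj2⟩) hv
    · rw [hspine n, smul_eV_apply]
      simp [hw]
    · rcases eq_or_lt_of_le hj1 with h1 | h2
      · subst h1
        have hb : B (eV (inr ⟨(k',1), ⟨hj1, hj2⟩⟩)) = μ2 • eV (inl (-(k' : ℤ))) :=
          hjoin k' hj2
        rw [hb, smul_eV_apply]
        simp [hw]
      · have hb : B (eV (inr ⟨(k',j'), ⟨hj1, hj2⟩⟩)) =
            μ2 • eV (inr ⟨(k', j' - 1), ⟨by omega, by omega⟩⟩) := hbranch k' j' h2 hj2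
        rw [hb, smul_eV_apply]
        rw [if_neg]
        intro hcon
        rw [hw] at hcon
        simp only [inr.injEq, Subtype.mk.injEq, Prod.mk.injEq] at hcon
        obtain ⟨rfl, hj⟩ := hcon
        apply hv (by omega)
        have : j' = j + 1 := by omega
        subst this
        rfl
  by_cases hjk : j + 1 ≤ k
  · have hv0 : (1:ℕ) ≤ j + 1 ∧ j + 1 ≤ k := ⟨by omega, hjk⟩
    rw [coordB_eq B g w (inr ⟨(k,j+1), hv0⟩)
      (fun v hv => by rw [hzero v (fun _ => hv), mul_zero])]
    have hb : B (eV (inr ⟨(k,j+1), hv0⟩)) =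
        μ2 • eV (inr ⟨(k, (j+1) - 1), ⟨by omega, by omega⟩⟩) := hbranch k (j+1) (by omega) hjk
    rw [hb, smul_eV_apply, if_pos (by simp [hw]), gbc, dif_pos hv0, mul_comm]
  · rw [coordB_eq B g w (inl 0) (fun v hv => by
        rw [hzero v (fun hc => absurd hc hjk), mul_zero]),
      hzero (inl 0) (fun hc => absurd hc hjk), mul_zero, gbc, dif_neg (by omega), mul_zero]

omit hbranch hjoin in
include hspine in
lemma coordB_spine (g : TreeAux.X) (hg : ∀ b : TreeBranch, g (Sum.inr b) = 0) (n : ℤ) :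
    (B g : ∀ _ : TreeV, ℂ) (inl n) = μ1 * g (inl (n+1)) := by
  rw [coordB_eq B g (inl n) (inl (n+1)) ?hv]
  · rw [hspine (n+1), smul_eV_apply, if_pos (by simp), mul_comm]
  case hv =>
    rintro (n' | b) hv
    · rw [hspine n', smul_eV_apply, if_neg, mul_zero]
      intro hcon
      simp only [inl.injEq] at hcon
      exact hv (by rw [inl.injEq]; omega)
    · rw [hg b, zero_mul]

include hspine in
set_option maxHeartbeats 2000000 in
lemma norm_B_ge (g : TreeAux.X) (hg : ∀ b : TreeBranch, g (Sum.inr b) = 0) :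
    ‖μ1‖ * ‖g‖ ≤ ‖B g‖ := by
  have h2 : ∀ x : ℝ, x ^ ((2:ℝ≥0∞)).toReal = x ^ (2:ℕ) := fun x => by
    rw [ENNReal.toReal_ofNat, show ((2:ℝ) = ((2:ℕ):ℝ)) by norm_num, Real.rpow_natCast]
  -- norm sums
  have hBsum : HasSum (fun v : TreeV => ‖(B g : ∀ _ : TreeV, ℂ) v‖ ^ (2:ℕ))
      (‖B g‖ ^ (2:ℕ)) := by
    have := lp.hasSum_norm (p := 2) (E := fun _ : TreeV => ℂ) (by norm_num) (B g)
    simpa [h2] using this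
  have hgsum : HasSum (fun v : TreeV => ‖(g : ∀ _ : TreeV, ℂ) v‖ ^ (2:ℕ)) (‖g‖ ^ (2:ℕ)) := by
    have := lp.hasSum_norm (p := 2) (E := fun _ : TreeV => ℂ) (by norm_num) g
    simpa [h2] using this
  have hg_inl : HasSum (fun n : ℤ => ‖(g : ∀ _ : TreeV, ℂ) (Sum.inl n)‖ ^ (2:ℕ))
      (‖g‖ ^ (2:ℕ)) := by
    refine (Function.Injective.hasSum_iff Sum.inl_injective ?_).mpr hgsum
    rintro (n | b) hv
    · exact absurd ⟨n, rfl⟩ hv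
    · simp [hg b]
  -- restrict to spine coordinates
  have key : ∑' n : ℤ, ‖(B g : ∀ _ : TreeV, ℂ) (Sum.inl n)‖ ^ (2:ℕ) ≤ ‖B g‖ ^ (2:ℕ) := by
    have := tsum_comp_le_tsum_of_inj hBsum.summable (fun v => by positivity)
      Sum.inl_injective
    rw [hBsum.tsum_eq] at this
    exact this
  have hcoord : ∀ n : ℤ, ‖(B g : ∀ _ : TreeV, ℂ) (Sum.inl n)‖ ^ (2:ℕ)
      = ‖μ1‖ ^ (2:ℕ) * ‖(g : ∀ _ : TreeV, ℂ) (Sum.inl (n+1))‖ ^ (2:ℕ) := fun n => by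
    rw [coordB_spine hspine g hg n, norm_mul, mul_pow]
  have hshift : ∑' n : ℤ, ‖(g : ∀ _ : TreeV, ℂ) (Sum.inl (n+1))‖ ^ (2:ℕ) = ‖g‖ ^ (2:ℕ) := by
    rw [← hg_inl.tsum_eq]
    exact Equiv.tsum_eq (Equiv.addRight (1:ℤ))
      (fun n : ℤ => ‖(g : ∀ _ : TreeV, ℂ) (Sum.inl n)‖ ^ (2:ℕ))
  have hfinal : (‖μ1‖ * ‖g‖) ^ (2:ℕ) ≤ ‖B g‖ ^ (2:ℕ) := by
    calc (‖μ1‖ * ‖g‖) ^ (2:ℕ) = ‖μ1‖ ^ (2:ℕ) * ‖g‖ ^ (2:ℕ) := mul_pow _ _ _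
    _ = ∑' n : ℤ, ‖μ1‖ ^ (2:ℕ) * ‖(g : ∀ _ : TreeV, ℂ) (Sum.inl (n+1))‖ ^ (2:ℕ) := by
        rw [tsum_mul_left, hshift]
    _ = ∑' n : ℤ, ‖(B g : ∀ _ : TreeV, ℂ) (Sum.inl n)‖ ^ (2:ℕ) := by
        simp_rw [hcoord]
    _ ≤ ‖B g‖ ^ (2:ℕ) := key
  exact (pow_le_pow_iff_left₀ (by positivity) (norm_nonneg _) (by norm_num)).mp hfinal

end Coord

section LemA

variable {μ1 μ2 : ℂ} {B : TreeAux.X →L[ℂ] TreeAux.X}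
open TreeAux Sum Finset

variable (hspine : ∀ n : ℤ, B (eV (Sum.inl n)) = μ1 • eV (Sum.inl (n - 1)))
variable (hbranch : ∀ (k j : ℕ) (h1 : 2 ≤ j) (h2 : j ≤ k),
      B (eV (Sum.inr ⟨(k, j), ⟨show 1 ≤ j from Nat.le_of_succ_le h1, h2⟩⟩)) =
        μ2 • eV (Sum.inr ⟨(k, j - 1), ⟨show 1 ≤ j - 1 from Nat.le_sub_of_add_le h1, show j - 1 ≤ k from (Nat.sub_le j 1).trans h2⟩⟩))
variable (hjoin : ∀ (k : ℕ) (hk : 1 ≤ k),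
      B (eV (Sum.inr ⟨(k, 1), ⟨le_refl 1, hk⟩⟩)) = μ2 • eV (Sum.inl (-(k : ℤ))))

lemma gbc_out (g : TreeAux.X) (k j : ℕ) (h : ¬ (1 ≤ j ∧ j ≤ k)) : gbc g k j = 0 :=
  dif_neg h

include hspine hbranch hjoin in
lemma chain_step {δ : ℝ} {m : ℕ} {u : ℕ → TreeAux.X}
    (hd : ∀ l, 1 ≤ l → l ≤ m → ‖u l - B (u (l - 1))‖ < δ)
    {l : ℕ} (hl1 : 1 ≤ l) (hlm : l ≤ m) {k j : ℕ} (h : 1 ≤ j ∧ j ≤ k) :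
    ‖gbc (u l) k j‖ ≤ ‖μ2‖ * ‖gbc (u (l-1)) k (j+1)‖ + δ := by
  have hw := lp.norm_apply_le_norm (p := 2) (E := fun _ : TreeV => ℂ) (by norm_num)
    (u l - B (u (l-1))) (inr ⟨(k,j),h⟩)
  have hsub : ((u l - B (u (l-1)) : TreeAux.X) : ∀ _ : TreeV, ℂ) (inr ⟨(k,j),h⟩)
      = (u l : ∀ _ : TreeV, ℂ) (inr ⟨(k,j),h⟩)
        - (B (u (l-1)) : ∀ _ : TreeV, ℂ) (inr ⟨(k,j),h⟩) := by
    rw [lp.coeFn_sub]; rfl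
  rw [hsub, coordB_branch hspine hbranch hjoin (u (l-1)) k j h] at hw
  have h1 : gbc (u l) k j = (u l : ∀ _ : TreeV, ℂ) (inr ⟨(k,j),h⟩) := dif_pos h
  calc ‖gbc (u l) k j‖
      ≤ ‖μ2 * gbc (u (l-1)) k (j+1)‖
        + ‖(u l : ∀ _ : TreeV, ℂ) (inr ⟨(k,j),h⟩) - μ2 * gbc (u (l-1)) k (j+1)‖ := by
        rw [h1]; exact norm_le_insert' _ _
    _ ≤ ‖μ2‖ * ‖gbc (u (l-1)) k (j+1)‖ + δ := by
        rw [norm_mul]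
        exact add_le_add le_rfl (hw.trans (le_of_lt (hd l hl1 hlm)))

include hspine hbranch hjoin in
lemma chain_backtrack {δ : ℝ} (hδ : 0 < δ) {m : ℕ} {u : ℕ → TreeAux.X}
    (hd : ∀ l, 1 ≤ l → l ≤ m → ‖u l - B (u (l - 1))‖ < δ) (k : ℕ) :
    ∀ t l j, 1 ≤ j → j + t ≤ k + 1 → t ≤ l → l ≤ m →
      ‖gbc (u l) k j‖ ≤ ‖μ2‖^t * ‖gbc (u (l-t)) k (j+t)‖
        + δ * (∑ i ∈ Finset.range t, ‖μ2‖^i) := by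
  intro t
  induction t with
  | zero => intro l j _ _ _ _; simp
  | succ t ih =>
    intro l j hj1 hjt htl hlm
    have h1 := ih l j hj1 (by omega) (by omega) hlm
    have h2 : ‖gbc (u (l-t)) k (j+t)‖ ≤ ‖μ2‖ * ‖gbc (u (l-t-1)) k (j+t+1)‖ + δ :=
      chain_step hspine hbranch hjoin hd (by omega) (by omega) ⟨by omega, by omega⟩
    have hμ : (0:ℝ) ≤ ‖μ2‖^t := by positivity
    calc ‖gbc (u l) k j‖
        ≤ ‖μ2‖^t * (‖μ2‖ * ‖gbc (u (l-t-1)) k (j+t+1)‖ + δ)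
          + δ * (∑ i ∈ Finset.range t, ‖μ2‖^i) :=
        h1.trans (by nlinarith [mul_le_mul_of_nonneg_left h2 hμ])
      _ = ‖μ2‖^(t+1) * ‖gbc (u (l-(t+1))) k (j+(t+1))‖
          + δ * (∑ i ∈ Finset.range (t+1), ‖μ2‖^i) := by
        rw [Finset.sum_range_succ, Nat.sub_sub, pow_succ]
        ring_nf
  
include hspine hbranch hjoin in
lemma branch_zero (g : TreeAux.X) (hg : ChainRecVec B g) :
    ∀ b : TreeBranch, (g : ∀ _ : TreeV, ℂ) (Sum.inr b) = 0 := by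
  have key : ∀ (k t j : ℕ), k < j + t → gbc g k j = 0 := by
    intro k t
    induction t with
    | zero => intro j hj; exact gbc_out g k j (by omega)
    | succ t ih =>
      intro j hj
      by_cases hj' : k < j + t
      · exact ih j hj'
      by_cases hjr : 1 ≤ j ∧ j ≤ k
      swap
      · exact gbc_out g k j hjr
      -- main argument
      by_contra hne
      have hε : 0 < ‖gbc g k j‖ := norm_pos_iff.mpr hne
      set Sk : ℝ := ∑ i ∈ Finset.range (k+1), ‖μ2‖^i with hSk
      have hSknn : 0 ≤ Sk := Finset.sum_nonneg fun i _ => by positivity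
      set δ : ℝ := ‖gbc g k j‖ / (2 * (Sk + 1)) with hδdef
      have hδ : 0 < δ := by positivity
      obtain ⟨m, u, hm, h0, hmEnd, hd⟩ := hg δ hδ
      have hsum_le : ∀ t' ≤ k + 1, (∑ i ∈ Finset.range t', ‖μ2‖^i) ≤ Sk := by
        intro t' ht'
        refine Finset.sum_le_sum_of_subset_of_nonneg ?_ (fun i _ _ => by positivity)
        exact Finset.range_subset_range.mpr ht'
      have hfin : ‖gbc g k j‖ ≤ δ * Sk := by
        by_cases hc : m + j ≤ k + 1
        · have hb := chain_backtrack hspine hbranch hjoin hδ hd k m m j hjr.1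
            (by omega) le_rfl le_rfl
          rw [hmEnd] at hb
          have h00 : gbc (u (m - m)) k (j + m) = 0 := by
            rw [Nat.sub_self, h0]
            by_cases hr : 1 ≤ j + m ∧ j + m ≤ k
            · exact ih (j + m) (by omega)
            · exact gbc_out g k (j+m) hr
          rw [h00, norm_zero, mul_zero, zero_add] at hb
          exact hb.trans (mul_le_mul_of_nonneg_left (hsum_le m (by omega)) hδ.le)
        · have ht : j + (k + 1 - j) = k + 1 := by omega
          have hb := chain_backtrack hspine hbranch hjoin hδ hd k (k+1-j) m j hjr.1
            (by omega) (by omega) le_rfl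
          rw [hmEnd] at hb
          have h00 : gbc (u (m - (k+1-j))) k (j + (k+1-j)) = 0 := by
            rw [ht]; exact gbc_out _ k (k+1) (by omega)
          rw [h00, norm_zero, mul_zero, zero_add] at hb
          exact hb.trans (mul_le_mul_of_nonneg_left (hsum_le _ (by omega)) hδ.le)
      have : δ * Sk < ‖gbc g k j‖ := by
        rw [hδdef]
        rw [div_mul_eq_mul_div, div_lt_iff₀ (by positivity)]
        nlinarith
      exact absurd (hfin.trans_lt this) (lt_irrefl _)
    
  rintro ⟨⟨k, j⟩, hb⟩
  have := key k (k+1) j (by omega)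
  rw [gbc, dif_pos hb] at this
  exact this

end LemA

section Part1

variable {μ1 μ2 : ℂ} {B : TreeAux.X →L[ℂ] TreeAux.X}
open TreeAux Sum

variable (hμ1 : 1 < ‖μ1‖)
variable (hspine : ∀ n : ℤ, B (eV (Sum.inl n)) = μ1 • eV (Sum.inl (n - 1)))
variable (hbranch : ∀ (k j : ℕ) (h1 : 2 ≤ j) (h2 : j ≤ k),
      B (eV (Sum.inr ⟨(k, j), ⟨show 1 ≤ j from Nat.le_of_succ_le h1, h2⟩⟩)) =
        μ2 • eV (Sum.inr ⟨(k, j - 1), ⟨show 1 ≤ j - 1 from Nat.le_sub_of_add_le h1, show j - 1 ≤ k from (Nat.sub_le j 1).trans h2⟩⟩))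
variable (hjoin : ∀ (k : ℕ) (hk : 1 ≤ k),
      B (eV (Sum.inr ⟨(k, 1), ⟨le_refl 1, hk⟩⟩)) = μ2 • eV (Sum.inl (-(k : ℤ))))

include hμ1 hspine hbranch hjoin in
lemma rel_zero (f : TreeAux.X) (hcr : ChainRecVec B f)
    (hrel : RelChainRecVec B {g : TreeAux.X | ChainRecVec B g} f) : f = 0 := by
  by_contra hf
  have hfpos : 0 < ‖f‖ := norm_pos_iff.mpr hf
  set a : ℝ := ‖f‖ / 2 with ha
  set δ : ℝ := (‖μ1‖ - 1) * a with hδdef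
  have hδ : 0 < δ := by
    apply mul_pos (by linarith) (by positivity)
  obtain ⟨m, u, hm, hS, h0, hmEnd, hd⟩ := hrel δ hδ
  have hgrow : ∀ l, l ≤ m → ‖μ1‖^l * a + a ≤ ‖u l‖ := by
    intro l
    induction l with
    | zero => intro _; rw [h0, pow_zero, one_mul]; linarith [ha]
    | succ l ih =>
      intro hl
      have hul := ih (by omega)
      have hbz := branch_zero hspine hbranch hjoin (u l) (hS l (by omega))
      have hBl : ‖μ1‖ * ‖u l‖ ≤ ‖B (u l)‖ := norm_B_ge hspine (u l) hbz
      have hjump : ‖u (l+1) - B (u l)‖ < δ := by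
        have := hd (l+1) (by omega) hl
        simpa using this
      have htri : ‖B (u l)‖ - δ ≤ ‖u (l+1)‖ := by
        have h1 : ‖B (u l)‖ - ‖u (l+1)‖ ≤ ‖u (l+1) - B (u l)‖ := by
          rw [norm_sub_rev]
          exact norm_sub_norm_le _ _
        linarith
      have hμpos : (0:ℝ) < ‖μ1‖ := by linarith
      have : ‖μ1‖ * (‖μ1‖^l * a + a) ≤ ‖μ1‖ * ‖u l‖ :=
        mul_le_mul_of_nonneg_left hul hμpos.le
      have hexp : ‖μ1‖ * (‖μ1‖^l * a + a) = ‖μ1‖^(l+1) * a + a + δ := by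
        rw [hδdef, pow_succ]; ring
      linarith
  have hfin := hgrow m le_rfl
  rw [hmEnd] at hfin
  have hp : 1 < ‖μ1‖^m := one_lt_pow₀ hμ1 (by omega)
  have : ‖f‖ = 2 * a := by rw [ha]; ring
  nlinarith

end Part1

section Constr

variable {μ1 μ2 : ℂ} {B : TreeAux.X →L[ℂ] TreeAux.X}
open TreeAux Sum

variable (hμ1 : 1 < ‖μ1‖) (hμ12 : ‖μ1‖ < ‖μ2‖)
variable (hspine : ∀ n : ℤ, B (eV (Sum.inl n)) = μ1 • eV (Sum.inl (n - 1)))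
variable (hbranch : ∀ (k j : ℕ) (h1 : 2 ≤ j) (h2 : j ≤ k),
      B (eV (Sum.inr ⟨(k, j), ⟨show 1 ≤ j from Nat.le_of_succ_le h1, h2⟩⟩)) =
        μ2 • eV (Sum.inr ⟨(k, j - 1), ⟨show 1 ≤ j - 1 from Nat.le_sub_of_add_le h1, show j - 1 ≤ k from (Nat.sub_le j 1).trans h2⟩⟩))
variable (hjoin : ∀ (k : ℕ) (hk : 1 ≤ k),
      B (eV (Sum.inr ⟨(k, 1), ⟨le_refl 1, hk⟩⟩)) = μ2 • eV (Sum.inl (-(k : ℤ))))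

include hspine in
lemma hspine2 (n n' : ℤ) (h : n' = n - 1) : B (eV (Sum.inl n)) = μ1 • eV (Sum.inl n') := by
  subst h; exact hspine n

include hbranch in
lemma hbranch2 (k j j' : ℕ) (h1 : 1 ≤ j') (h2 : j' + 1 = j) (h3 : j ≤ k)
    (p : 1 ≤ j ∧ j ≤ k) (p' : 1 ≤ j' ∧ j' ≤ k) :
    B (eV (Sum.inr ⟨(k,j),p⟩)) = μ2 • eV (Sum.inr ⟨(k,j'),p'⟩) := by
  have hjj : j - 1 = j' := by omega
  subst hjj
  exact hbranch k j (by omega) h3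

include hjoin in
lemma hjoin2 (k j : ℕ) (p : 1 ≤ j ∧ j ≤ k) (hj : j = 1) (nn : ℤ) (hnn : nn = -(k:ℤ)) :
    B (eV (Sum.inr ⟨(k,j),p⟩)) = μ2 • eV (Sum.inl nn) := by
  subst hj; subst hnn; exact hjoin k p.2

include hμ1 hμ12 hspine hbranch hjoin in
lemma spine_CR (n : ℤ) (hn : n ≤ 0) : ChainRecVec B (eV (Sum.inl n)) := by
  intro δ hδ
  have hμ1pos : (0:ℝ) < ‖μ1‖ := by linarith
  have hμ2pos : (0:ℝ) < ‖μ2‖ := by linarith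
  have hμ1ne : μ1 ≠ 0 := fun h => by rw [h, norm_zero] at hμ1; linarith
  have hμ2ne : μ2 ≠ 0 := fun h => by rw [h, norm_zero] at hμ12; linarith
  -- choose s
  have hr : ‖μ1‖ / ‖μ2‖ < 1 := (div_lt_one hμ2pos).mpr hμ12
  have hrpos : 0 ≤ ‖μ1‖ / ‖μ2‖ := by positivity
  obtain ⟨N, hN⟩ := exists_pow_lt_of_lt_one (div_pos hδ hμ2pos) hr
  obtain ⟨s, hs2, hsδ⟩ : ∃ s : ℕ, 2 ≤ s ∧ ‖μ2‖ * (‖μ1‖/‖μ2‖)^s < δ := by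
    refine ⟨max N 2, le_max_right _ _, ?_⟩
    have hsN : (‖μ1‖/‖μ2‖)^(max N 2) ≤ (‖μ1‖/‖μ2‖)^N :=
      pow_le_pow_of_le_one hrpos hr.le (le_max_left _ _)
    have h1 := hsN.trans_lt hN
    calc ‖μ2‖ * (‖μ1‖/‖μ2‖)^(max N 2) < ‖μ2‖ * (δ/‖μ2‖) :=
      (mul_lt_mul_iff_right₀ hμ2pos).mpr h1
    _ = δ := by
      rw [mul_comm, div_mul_cancel₀ _ hμ2pos.ne']
  -- choose M
  obtain ⟨M, hM⟩ := exists_pow_lt_of_lt_one hδ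
    ((inv_lt_one₀ hμ1pos).mpr hμ1)
  -- setup
  set a : ℕ := n.natAbs with hadef
  set k : ℕ := s + a with hkdef
  have hk1 : 1 ≤ k := by omega
  have hkn : -(k:ℤ) = n - s := by omega
  set ε : ℂ := -(μ1^s / μ2^(s-1)) with hεdef
  have hεnorm : ‖ε‖ = ‖μ2‖ * (‖μ1‖/‖μ2‖)^s := by
    rw [hεdef, norm_neg, norm_div, norm_pow, norm_pow, div_pow]
    have hpow : ‖μ2‖^s = ‖μ2‖^(s-1) * ‖μ2‖ := by
      rw [← pow_succ]; congr 1; omega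
    rw [hpow]
    rw [← div_div, mul_comm, div_mul_cancel₀ _ hμ2pos.ne']
  have hεδ : ‖ε‖ < δ := by rw [hεnorm]; exact hsδ
  have hcancel : μ1^s + μ2^(s-1) * ε = 0 := by
    rw [hεdef]
    field_simp
    ring
  -- the chain
  set u : ℕ → TreeAux.X := fun l =>
    if h0 : l = 0 then eV (Sum.inl n)
    else if hl : l ≤ s - 1 then
      μ1^l • eV (Sum.inl (n - (l:ℤ)))
        + (μ2^(l-1) * ε) • eV (Sum.inr ⟨(k, s - l), ⟨by omega, by omega⟩⟩)
    else if l = s then 0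
    else μ1^(((l - s - 1 : ℕ) : ℤ) - (M:ℤ)) • eV (Sum.inl ((M:ℤ) + n - ((l - s - 1 : ℕ) : ℤ)))
    with hudef
  have hu0 : u 0 = eV (Sum.inl n) := by rw [hudef]; beta_reduce; rw [dif_pos rfl]
  have huMid : ∀ (l : ℕ) (h1 : 1 ≤ l) (h2 : l ≤ s - 1),
      u l = μ1^l • eV (Sum.inl (n - (l:ℤ)))
        + (μ2^(l-1) * ε) • eV (Sum.inr ⟨(k, s - l), ⟨by omega, by omega⟩⟩) := by
    intro l h1 h2
    rw [hudef]; beta_reduce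
    rw [dif_neg (by omega), dif_pos h2]
  have huS : u s = 0 := by
    rw [hudef]; beta_reduce
    rw [dif_neg (by omega), dif_neg (by omega), if_pos rfl]
  have huEnd : ∀ i : ℕ, u (s + 1 + i)
      = μ1^((i:ℤ) - (M:ℤ)) • eV (Sum.inl ((M:ℤ) + n - (i:ℤ))) := by
    intro i
    rw [hudef]; beta_reduce
    rw [dif_neg (by omega), dif_neg (by omega), if_neg (by omega)]
    have : s + 1 + i - s - 1 = i := by omega
    rw [this]
  refine ⟨s + 1 + M, u, by omega, hu0, ?_, ?_⟩
  · -- endpoint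
    rw [huEnd M, sub_self, zpow_zero, one_smul]
    congr 2
    omega
  · intro l hl1 hlm
    rcases Nat.lt_or_ge l 2 with hl | hl2
    · -- l = 1
      have hl1' : l = 1 := by omega
      subst hl1'
      rw [huMid 1 le_rfl (by omega), show (1:ℕ) - 1 = 0 from rfl, hu0,
        hspine2 hspine n (n - (1:ℕ)) (by push_cast; ring), pow_one, pow_zero, one_mul]
      have : μ1 • eV (Sum.inl (n - (1:ℕ))) + ε • eV (Sum.inr ⟨(k, s-1), ⟨by omega, by omega⟩⟩)
          - μ1 • eV (Sum.inl (n - (1:ℕ))) = ε • eV (Sum.inr ⟨(k, s-1), ⟨by omega, by omega⟩⟩) := by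
        abel
      rw [this, norm_smul_eV]
      exact hεδ
    rcases Nat.lt_or_ge l s with hls | hls
    · -- 2 ≤ l ≤ s - 1
      have hll : l ≤ s - 1 := by omega
      rw [huMid l (by omega) hll, huMid (l-1) (by omega) (by omega), map_add, map_smul, map_smul,
        hspine2 hspine (n - ((l-1:ℕ):ℤ)) (n - (l:ℤ)) (by push_cast [show 1 ≤ l by omega]; ring),
        hbranch2 hbranch k (s - (l-1)) (s - l) (by omega) (by omega) (by omega) _ ⟨by omega, by omega⟩,
        smul_smul, smul_smul]
      have hsc1 : μ1 ^ (l - 1) * μ1 = μ1 ^ l := by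
        rw [← pow_succ]; congr 1; omega
      have hsc : μ2 ^ (l - 1 - 1) * ε * μ2 = μ2 ^ (l - 1) * ε := by
        rw [mul_comm _ μ2, ← mul_assoc, ← pow_succ']
        congr 2
        omega
      rw [hsc1, hsc, sub_self, norm_zero]
      exact hδ
    · rcases Nat.lt_or_ge l (s+1) with hls' | hls'
      · -- l = s
        have hl' : l = s := by omega
        rw [hl', huS, huMid (s-1) (by omega) le_rfl, map_add, map_smul, map_smul,
          hspine2 hspine (n - ((s-1:ℕ):ℤ)) (n - (s:ℤ)) (by push_cast [show 1 ≤ s by omega]; ring),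
          hjoin2 hjoin k (s - (s-1)) ⟨by omega, by omega⟩ (by omega) (n - (s:ℤ)) (by omega),
          smul_smul, smul_smul, ← add_smul]
        have hz : μ1 ^ (s-1) * μ1 + μ2 ^ (s-1-1) * ε * μ2 = 0 := by
          rw [← pow_succ, show s - 1 + 1 = s from by omega, mul_comm _ μ2, ← mul_assoc,
            ← pow_succ', show s - 1 - 1 + 1 = s - 1 from by omega]
          exact hcancel
        rw [hz, zero_smul, zero_sub, norm_neg, norm_zero]
        exact hδ
      · rcases Nat.lt_or_ge l (s+2) with hls'' | hls''
        · -- l = s + 1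
          have hl' : l = s + 1 := by omega
          have hE := huEnd 0
          rw [show s + 1 + 0 = s + 1 from rfl] at hE
          rw [hl', hE, show s + 1 - 1 = s from by omega, huS, map_zero, sub_zero, norm_smul_eV,
            norm_zpow, show ((0:ℕ):ℤ) - (M:ℤ) = -(M:ℤ) from by omega, zpow_neg, ← inv_zpow,
            zpow_natCast]
          exact hM
        · -- s + 2 ≤ l
          set i : ℕ := l - s - 1 with hidef
          have hi1 : 1 ≤ i := by omega
          have hil : l = s + 1 + i := by omega
          have hil' : l - 1 = s + 1 + (i - 1) := by omega
          rw [hil, huEnd i, show s + 1 + i - 1 = s + 1 + (i-1) from by omega, huEnd (i-1),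
            map_smul,
            hspine2 hspine ((M:ℤ) + n - ((i-1:ℕ):ℤ)) ((M:ℤ) + n - (i:ℤ))
              (by push_cast [hi1]; ring),
            smul_smul]
          have hzp : μ1 ^ (((i-1:ℕ):ℤ) - (M:ℤ)) * μ1 = μ1 ^ ((i:ℤ) - (M:ℤ)) := by
            rw [← zpow_add_one₀ hμ1ne]
            congr 1
            push_cast [hi1]
            ring
          rw [hzp, sub_self, norm_zero]
          exact hδ

end Constr

section Indep

open TreeAux Sum

lemma eV_linIndep : LinearIndependent ℂ (fun t : ℕ => eV (Sum.inl (-(t:ℤ)))) := by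
  rw [linearIndependent_iff']
  intro s g hsum t ht
  have h := congrArg (coordCLM (Sum.inl (-(t:ℤ)))) hsum
  rw [map_sum, map_zero] at h
  have h2 : ∀ i ∈ s, i ≠ t →
      coordCLM (Sum.inl (-(t:ℤ))) (g i • eV (Sum.inl (-(i:ℤ)))) = 0 := by
    intro i _ hit
    rw [map_smul, smul_eq_mul, coord_apply, eV_apply, if_neg, mul_zero]
    simp only [inl.injEq, neg_inj, Int.natCast_inj, Ne]
    omega
  rw [Finset.sum_eq_single_of_mem t ht h2, map_smul, smul_eq_mul, coord_apply,
    eV_apply, if_pos rfl, mul_one] at h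
  exact h

end Indep

theorem stmt_9 (μ1 μ2 : ℂ) (hμ1 : 1 < ‖μ1‖) (hμ12 : ‖μ1‖ < ‖μ2‖)
    (B : lp (fun _ : TreeV => ℂ) 2 →L[ℂ] lp (fun _ : TreeV => ℂ) 2)
    (hspine : ∀ n : ℤ, B (eV (Sum.inl n)) = μ1 • eV (Sum.inl (n - 1)))
    (hbranch : ∀ (k j : ℕ) (h1 : 2 ≤ j) (h2 : j ≤ k),
      B (eV (Sum.inr ⟨(k, j), ⟨show 1 ≤ j by omega, h2⟩⟩)) =
        μ2 • eV (Sum.inr ⟨(k, j - 1), ⟨show 1 ≤ j - 1 by omega, show j - 1 ≤ k by omega⟩⟩))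
    (hjoin : ∀ (k : ℕ) (hk : 1 ≤ k),
      B (eV (Sum.inr ⟨(k, 1), ⟨le_refl 1, hk⟩⟩)) = μ2 • eV (Sum.inl (-(k : ℤ)))) :
    -- the restriction of `B` to `CR(B)` has only `0` as a chain recurrent vector ...
    {f : lp (fun _ : TreeV => ℂ) 2 | ChainRecVec B f ∧
        RelChainRecVec B {g : lp (fun _ : TreeV => ℂ) 2 | ChainRecVec B g} f} = {0} ∧
    (∃ f : lp (fun _ : TreeV => ℂ) 2, ChainRecVec B f ∧
        ¬ RelChainRecVec B {g : lp (fun _ : TreeV => ℂ) 2 | ChainRecVec B g} f) ∧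
    -- ... while `CR(B)` is infinite dimensional.
    ¬ ∃ s : Finset (lp (fun _ : TreeV => ℂ) 2),
        {f : lp (fun _ : TreeV => ℂ) 2 | ChainRecVec B f} ⊆
          (Submodule.span ℂ (s : Set (lp (fun _ : TreeV => ℂ) 2)) :
            Set (lp (fun _ : TreeV => ℂ) 2)) := by
  have hCR0 : ChainRecVec B 0 := by
    intro δ hδ
    exact ⟨1, fun _ => 0, le_rfl, rfl, rfl, fun l _ _ => by
      rw [map_zero, sub_zero, norm_zero]; exact hδ⟩
  refine ⟨?_, ?_, ?_⟩
  · ext f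
    simp only [Set.mem_setOf_eq, Set.mem_singleton_iff]
    constructor
    · rintro ⟨hcr, hrel⟩
      exact rel_zero hμ1 hspine hbranch hjoin f hcr hrel
    · rintro rfl
      refine ⟨hCR0, ?_⟩
      intro δ hδ
      exact ⟨1, fun _ => 0, le_rfl, fun l _ => hCR0, rfl, rfl, fun l _ _ => by
        rw [map_zero, sub_zero, norm_zero]; exact hδ⟩
  · refine ⟨eV (Sum.inl 0), spine_CR hμ1 hμ12 hspine hbranch hjoin 0 le_rfl, fun hrel => ?_⟩
    have h0 := rel_zero hμ1 hspine hbranch hjoin (eV (Sum.inl 0))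
      (spine_CR hμ1 hμ12 hspine hbranch hjoin 0 le_rfl) hrel
    have := TreeAux.norm_eV (Sum.inl (0:ℤ))
    rw [h0, norm_zero] at this
    norm_num at this
  · rintro ⟨s, hsub⟩
    set p := Submodule.span ℂ (s : Set (lp (fun _ : TreeV => ℂ) 2)) with hp
    have hmem : ∀ t : ℕ, eV (Sum.inl (-(t:ℤ))) ∈ p := fun t =>
      hsub (spine_CR hμ1 hμ12 hspine hbranch hjoin (-(t:ℤ)) (by omega))
    have hFI : LinearIndependent ℂ (fun t : ℕ => (⟨eV (Sum.inl (-(t:ℤ))), hmem t⟩ : p)) := by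
      apply LinearIndependent.of_comp p.subtype
      exact eV_linIndep
    exact Module.Finite.not_linearIndependent_of_infinite _ hFI
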